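/- Every L-unipotent semigroup is orthodox and its idempotents form a right regular band: if S is an L-unipotent semigroup and e, f ∈ S are idempotents, then e*f is idempotent and e*f*e = f*e. Hence the set E(S) of idempotents of S is a subsemigroup of S satisfying the right regular band identity x*y*x = y*x. -/

import Mathlib

/-- The principal left ideal `Sa = {x*a : x ∈ S}` of an element of a semigroup. -/
def leftIdeal {S : Type*} [Semigroup S] (a : S) : Set S := {y | ∃ x : S, y = x * a}

/-- The principal right ideal `aS = {a*x : x ∈ S}` of an element of a semigroup. -/
def rightIdeal {S : Type*} [Semigroup S] (a : S) : Set S := {y | ∃ x : S, y = a * x}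

/-- A semigroup is (von Neumann) regular if every element `a` has some `x` with `a*x*a = a`. -/
def IsRegularSemigroup (S : Type*) [Semigroup S] : Prop :=
  ∀ a : S, ∃ x : S, a * x * a = a

/-- A regular semigroup is `L`-unipotent if any two `L`-related idempotents are equal. -/
def IsLUnipotent (S : Type*) [Semigroup S] : Prop :=
  IsRegularSemigroup S ∧
    ∀ e f : S, e * e = e → f * f = f → leftIdeal e = leftIdeal f → e = f

/-!
For idempotents `e, f`, let `x` be an inverse of `ef` and `g = fxe`. Both `g` and `eg` are
idempotents generating the same principal left ideal, so `L`-unipotency gives `g = eg`; hence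
`ef = (ef)x(ef) = gf` is idempotent. Then `efe` and `fe` are `L`-related idempotents, so they are
equal.
-/

section

variable {S : Type*} [Semigroup S]

theorem IsRegularSemigroup.exists_inverse (hS : IsRegularSemigroup S) (a : S) :
    ∃ x : S, a * x * a = a ∧ x * a * x = x := by
  obtain ⟨z, hz⟩ := hS a
  refine ⟨z * a * z, ?_, ?_⟩
  · calc a * (z * a * z) * a = a * z * a * z * a := by simp only [mul_assoc]
      _ = a := by rw [hz, hz]
  · calc z * a * z * a * (z * a * z) = z * (a * z * a) * (z * a * z) := by simp only [mul_assoc]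
      _ = z * a * (z * a * z) := by rw [hz]
      _ = z * (a * z * a) * z := by simp only [mul_assoc]
      _ = z * a * z := by rw [hz]

theorem leftIdeal_eq_of_mul_eq {a b : S} (hab : a * b = a) (hba : b * a = b) :
    leftIdeal a = leftIdeal b := by
  ext y
  constructor
  · rintro ⟨s, rfl⟩
    exact ⟨s * a, by rw [mul_assoc, hab]⟩
  · rintro ⟨s, rfl⟩
    exact ⟨s * b, by rw [mul_assoc, hba]⟩

namespace IsLUnipotent

variable (hS : IsLUnipotent S) {e f : S}
include hS

theorem eq_of_mul_eq (he : IsIdempotentElem e) (hf : IsIdempotentElem f)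
    (hef : e * f = e) (hfe : f * e = f) : e = f :=
  hS.2 e f he hf (leftIdeal_eq_of_mul_eq hef hfe)

theorem isIdempotentElem_mul (he : IsIdempotentElem e) (hf : IsIdempotentElem f) :
    IsIdempotentElem (e * f) := by
  obtain ⟨x, hx, hxx⟩ := hS.1.exists_inverse (e * f)
  set g := f * x * e
  have hge : g * e = g := by simp only [g, mul_assoc, he.eq]
  have hfg : f * g = g := by simp only [g, ← mul_assoc, hf.eq]
  have hg : IsIdempotentElem g := by
    calc g * g = f * (x * (e * f) * x) * e := by simp only [g, mul_assoc]
      _ = g := by rw [hxx]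
  have heg : IsIdempotentElem (e * g) := by
    calc e * g * (e * g) = (e * f * x * (e * f)) * x * e := by
          simp only [g, mul_assoc, he.eq, ← mul_assoc e e]
      _ = e * g := by rw [hx]; simp only [g, mul_assoc]
  have hg_eq : g = e * g := hS.eq_of_mul_eq hg heg
    (by rw [← mul_assoc, hge, hg.eq]) (by rw [mul_assoc, hg.eq])
  have hef : e * f = g * f := by
    calc e * f = e * f * x * (e * f) := hx.symm
      _ = e * g * f := by simp only [g, mul_assoc]
      _ = g * f := by rw [← hg_eq]
  calc e * f * (e * f) = g * (f * g) * f := by rw [hef]; simp only [mul_assoc]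
    _ = e * f := by rw [hfg, hg.eq, hef]

theorem mul_mul_self_eq (he : IsIdempotentElem e) (hf : IsIdempotentElem f) :
    e * f * e = f * e := by
  have hef := hS.isIdempotentElem_mul he hf
  have hfe := hS.isIdempotentElem_mul hf he
  refine hS.eq_of_mul_eq (hS.isIdempotentElem_mul hef he) hfe ?_ ?_
  · calc e * f * e * (f * e) = e * f * (e * f) * e := by simp only [mul_assoc]
      _ = e * f * e := by rw [hef.eq]
  · calc f * e * (e * f * e) = f * (e * e) * f * e := by simp only [mul_assoc]
      _ = f * e * (f * e) := by rw [he.eq]; simp only [mul_assoc]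
      _ = f * e := hfe.eq

def idempotents : Subsemigroup S where
  carrier := {e | IsIdempotentElem e}
  mul_mem' := hS.isIdempotentElem_mul

end IsLUnipotent

end

/-- An `L`-unipotent semigroup is orthodox and its idempotents form a right regular band:
products of idempotents are idempotent, `e*f*e = f*e`, and the idempotents form a
subsemigroup satisfying the right regular band identity. -/
theorem stmt3 {S : Type*} [Semigroup S] (hS : IsLUnipotent S) :
    (∀ e f : S, e * e = e → f * f = f →
      (e * f) * (e * f) = e * f ∧ e * f * e = f * e) ∧
    ∃ T : Subsemigroup S, (T : Set S) = {e : S | e * e = e} ∧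
      ∀ x ∈ T, ∀ y ∈ T, x * y * x = y * x :=
  ⟨fun _ _ he hf => ⟨hS.isIdempotentElem_mul he hf, hS.mul_mul_self_eq he hf⟩,
    hS.idempotents, rfl, fun _ hx _ hy => hS.mul_mul_self_eq hx hy⟩
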